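/- arXiv:2204.13439 — 3 statements merged into one kernel-verified Lean document; each statement's English description precedes it below -/
import Mathlib

section
/- Strong duality for entropy-loss Mahalanobis balancing (Theorem 1, entropy case): Let v₁, …, v_m be vectors in ℝ^K and let δ > 0. Then the infimum of ∑_{i=1}^m wᵢ log wᵢ over all w ∈ ℝ^m with wᵢ ≥ 0 for all i and ‖∑_{i=1}^m wᵢ vᵢ‖₂ ≤ √δ equals the negative of the infimum over θ ∈ ℝ^K of ∑_{i=1}^m exp(⟨θ, vᵢ⟩ − 1) + √δ ‖θ‖₂. -/
open scoped RealInnerProductSpace BigOperators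

/-!
The dual objective `θ ↦ ∑ exp (⟪θ, vᵢ⟫ - 1) + c ‖θ‖` is continuous and coercive, so it has a
minimiser `θ`. Since the smooth part has gradient `∑ wᵢ • vᵢ` with `wᵢ = exp (⟪θ, vᵢ⟫ - 1)`,
first-order optimality against the penalty `c ‖·‖` says that `w` is feasible and that
`⟪θ, ∑ wᵢ • vᵢ⟫ = -c ‖θ‖`; this makes the entropy of `w` equal to minus the dual value.
Weak duality is the Fenchel–Young inequality `x a - exp (a - 1) ≤ x log x` summed over `i`,
combined with Cauchy–Schwarz.
-/

open Filter Set Topology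

lemma Real.mul_sub_exp_sub_one_le_mul_log {x : ℝ} (hx : 0 ≤ x) (a : ℝ) :
    x * a - Real.exp (a - 1) ≤ x * Real.log x := by
  rcases hx.eq_or_lt with rfl | hx
  · simp [(Real.exp_pos _).le]
  · -- `exp (a - 1) = x * exp (a - 1 - log x) ≥ x * (a - log x)`
    have h := Real.add_one_le_exp (a - 1 - Real.log x)
    rw [Real.exp_sub, Real.exp_log hx, le_div_iff₀ hx] at h
    nlinarith

variable {E : Type*} [NormedAddCommGroup E]

lemma exists_isMinOn_add_mul_norm [ProperSpace E] {F : E → ℝ} (hF : Continuous F)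
    (hbdd : BddBelow (range F)) {c : ℝ} (hc : 0 < c) :
    ∃ θ, IsMinOn (fun x => F x + c * ‖x‖) univ θ := by
  obtain ⟨C, hC⟩ := hbdd
  obtain ⟨θ, hθ⟩ := (hF.add (continuous_const.mul continuous_norm)).exists_forall_le
    (tendsto_atTop_add_left_of_le _ C (fun x => hC (mem_range_self x))
      (tendsto_norm_cocompact_atTop.const_mul_atTop hc))
  exact ⟨θ, isMinOn_univ_iff.2 hθ⟩

variable [InnerProductSpace ℝ E]

section Optimality

variable [CompleteSpace E] {F : E → ℝ} {g θ : E} {c : ℝ}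

lemma HasGradientAt.le_inner_of_eventually_le {η : E} {a : ℝ} (hF : HasGradientAt F g θ)
    (h : ∀ᶠ t in 𝓝[>] (0 : ℝ), a * t ≤ F (θ + t • η) - F θ) : a ≤ ⟪g, η⟫ := by
  have hline : HasDerivAt (fun t : ℝ => F (θ + t • η)) ⟪g, η⟫ 0 := by
    have hpath : HasDerivAt (fun t : ℝ => θ + t • η) η 0 :=
      ((hasDerivAt_id 0).smul_const η).const_add θ |>.congr_deriv (one_smul ℝ η)
    have hF' : HasGradientAt F g (θ + (0 : ℝ) • η) := by rwa [zero_smul, add_zero]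
    exact hF'.hasFDerivAt.comp_hasDerivAt 0 hpath
  refine ge_of_tendsto (by simpa using hline.tendsto_slope_zero_right) ?_
  filter_upwards [h, self_mem_nhdsWithin] with t ht (htpos : 0 < t)
  rw [le_inv_mul_iff₀ htpos]
  linarith

lemma neg_mul_norm_le_inner_of_isMinOn_add_mul_norm (hF : HasGradientAt F g θ) (hc : 0 ≤ c)
    (hmin : IsMinOn (fun x => F x + c * ‖x‖) univ θ) (η : E) : -(c * ‖η‖) ≤ ⟪g, η⟫ := by
  refine hF.le_inner_of_eventually_le ?_
  filter_upwards [self_mem_nhdsWithin] with t (ht : 0 < t)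
  have hθt : F θ + c * ‖θ‖ ≤ F (θ + t • η) + c * ‖θ + t • η‖ := isMinOn_univ_iff.1 hmin _
  have : ‖θ + t • η‖ ≤ ‖θ‖ + t * ‖η‖ := by
    simpa [norm_smul, abs_of_pos ht] using norm_add_le θ (t • η)
  nlinarith

lemma norm_le_of_isMinOn_add_mul_norm (hF : HasGradientAt F g θ) (hc : 0 ≤ c)
    (hmin : IsMinOn (fun x => F x + c * ‖x‖) univ θ) : ‖g‖ ≤ c := by
  have h := neg_mul_norm_le_inner_of_isMinOn_add_mul_norm hF hc hmin (-g)
  rw [inner_neg_right, real_inner_self_eq_norm_mul_norm, norm_neg] at h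
  rcases (norm_nonneg g).eq_or_lt with h0 | hpos
  · rw [← h0]; exact hc
  · nlinarith

lemma inner_eq_neg_mul_norm_of_isMinOn_add_mul_norm (hF : HasGradientAt F g θ) (hc : 0 ≤ c)
    (hmin : IsMinOn (fun x => F x + c * ‖x‖) univ θ) : ⟪θ, g⟫ = -(c * ‖θ‖) := by
  -- shrinking `θ` towards `0` lowers the penalty by exactly `c * t * ‖θ‖`
  have hshrink : c * ‖θ‖ ≤ ⟪g, -θ⟫ := by
    refine hF.le_inner_of_eventually_le ?_
    filter_upwards [Ioo_mem_nhdsGT one_pos] with t ⟨ht0, ht1⟩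
    have hθt : F θ + c * ‖θ‖ ≤ F (θ + t • -θ) + c * ‖θ + t • -θ‖ := isMinOn_univ_iff.1 hmin _
    have : θ + t • -θ = (1 - t) • θ := by module
    rw [this] at hθt ⊢
    rw [norm_smul, Real.norm_eq_abs, abs_of_pos (sub_pos.2 ht1)] at hθt
    linarith
  have hcs := neg_le_of_abs_le (abs_real_inner_le_norm θ g)
  have hg := mul_le_mul_of_nonneg_left (norm_le_of_isMinOn_add_mul_norm hF hc hmin) (norm_nonneg θ)
  rw [inner_neg_right, real_inner_comm] at hshrink
  nlinarith

end Optimality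

variable {ι : Type*} [Fintype ι]

lemma hasGradientAt_sum_exp_inner_sub_one [CompleteSpace E] (v : ι → E) (θ : E) :
    HasGradientAt (fun x => ∑ i, Real.exp (⟪x, v i⟫ - 1))
      (∑ i, Real.exp (⟪θ, v i⟫ - 1) • v i) θ := by
  have hinner (i : ι) : HasFDerivAt (fun x => ⟪x, v i⟫) (innerSL ℝ (v i)) θ := by
    rw [show (fun x => ⟪x, v i⟫) = innerSL ℝ (v i) from funext fun x => real_inner_comm (v i) x]
    exact (innerSL ℝ (v i)).hasFDerivAt
  have h := HasFDerivAt.fun_sum (u := Finset.univ) fun i _ => ((hinner i).sub_const 1).exp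
  refine hasGradientAt_iff_hasFDerivAt.2 (h.congr_fderiv ?_)
  ext x
  simp

lemma sum_exp_mul_log_exp (v : ι → E) (θ : E) :
    ∑ i, Real.exp (⟪θ, v i⟫ - 1) * Real.log (Real.exp (⟪θ, v i⟫ - 1)) =
      ⟪θ, ∑ i, Real.exp (⟪θ, v i⟫ - 1) • v i⟫ - ∑ i, Real.exp (⟪θ, v i⟫ - 1) := by
  simp only [Real.log_exp, inner_sum, real_inner_smul_right, ← Finset.sum_sub_distrib]
  exact Finset.sum_congr rfl fun i _ => by ring

lemma neg_sum_exp_add_mul_norm_le_sum_mul_log {v : ι → E} {w : ι → ℝ} {c : ℝ}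
    (hw : ∀ i, 0 ≤ w i) (hfeas : ‖∑ i, w i • v i‖ ≤ c) (θ : E) :
    -(∑ i, Real.exp (⟪θ, v i⟫ - 1) + c * ‖θ‖) ≤ ∑ i, w i * Real.log (w i) := by
  have hyoung : ∑ i, w i * ⟪θ, v i⟫ - ∑ i, Real.exp (⟪θ, v i⟫ - 1) ≤
      ∑ i, w i * Real.log (w i) := by
    rw [← Finset.sum_sub_distrib]
    exact Finset.sum_le_sum fun i _ => Real.mul_sub_exp_sub_one_le_mul_log (hw i) _
  have hcs := neg_le_of_abs_le (abs_real_inner_le_norm θ (∑ i, w i • v i))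
  simp only [inner_sum, real_inner_smul_right] at hcs
  nlinarith [mul_le_mul_of_nonneg_left hfeas (norm_nonneg θ)]

theorem entropy_balancing_strong_duality [ProperSpace E] (v : ι → E) {c : ℝ} (hc : 0 < c) :
    sInf {p : ℝ | ∃ w : ι → ℝ, (∀ i, 0 ≤ w i) ∧ ‖∑ i, w i • v i‖ ≤ c ∧
        p = ∑ i, w i * Real.log (w i)} =
      - sInf {d : ℝ | ∃ θ : E, d = ∑ i, Real.exp (⟪θ, v i⟫ - 1) + c * ‖θ‖} := by
  set F := fun θ : E => ∑ i, Real.exp (⟪θ, v i⟫ - 1)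
  obtain ⟨θ, hθ⟩ := exists_isMinOn_add_mul_norm (F := F) (by fun_prop)
    ⟨0, by rintro _ ⟨x, rfl⟩; positivity⟩ hc
  have hgrad := hasGradientAt_sum_exp_inner_sub_one v θ
  have hfeas := norm_le_of_isMinOn_add_mul_norm hgrad hc.le hθ
  have hslack := inner_eq_neg_mul_norm_of_isMinOn_add_mul_norm hgrad hc.le hθ
  have hprimal : IsLeast {p : ℝ | ∃ w : ι → ℝ, (∀ i, 0 ≤ w i) ∧ ‖∑ i, w i • v i‖ ≤ c ∧
      p = ∑ i, w i * Real.log (w i)} (-(F θ + c * ‖θ‖)) := by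
    refine ⟨⟨_, fun i => (Real.exp_pos _).le, hfeas, ?_⟩, ?_⟩
    · rw [sum_exp_mul_log_exp, hslack]; ring
    · rintro _ ⟨w, hw, hwfeas, rfl⟩
      exact neg_sum_exp_add_mul_norm_le_sum_mul_log hw hwfeas θ
  have hdual : IsLeast {d : ℝ | ∃ θ : E, d = ∑ i, Real.exp (⟪θ, v i⟫ - 1) + c * ‖θ‖}
      (F θ + c * ‖θ‖) :=
    ⟨⟨θ, rfl⟩, by rintro _ ⟨x, rfl⟩; exact isMinOn_univ_iff.1 hθ x⟩
  rw [hprimal.csInf_eq, hdual.csInf_eq]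

/-- Strong duality for entropy-loss Mahalanobis balancing (Theorem 1, entropy case):
the infimum of the primal entropy objective over feasible nonnegative weights equals
the negative of the infimum of the dual objective. -/
theorem mahalanobis_entropy_strong_duality (K m : ℕ)
    (v : Fin m → EuclideanSpace ℝ (Fin K)) (δ : ℝ) (hδ : 0 < δ) :
    sInf {p : ℝ | ∃ w : Fin m → ℝ, (∀ i, 0 ≤ w i) ∧
        ‖∑ i, w i • v i‖ ≤ Real.sqrt δ ∧
        p = ∑ i, w i * Real.log (w i)} =
      - sInf {d : ℝ | ∃ θ : EuclideanSpace ℝ (Fin K),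
        d = ∑ i, Real.exp (⟪θ, v i⟫ - 1) + Real.sqrt δ * ‖θ‖} :=
  entropy_balancing_strong_duality v (Real.sqrt_pos.2 hδ)
end

section
/- Primal solution recovery from the dual (Theorem 1, relation (13), entropy case): Let v₁, …, v_m be vectors in ℝ^K and let δ > 0. Suppose θ̂ ∈ ℝ^K is a global minimizer of D(θ) = ∑_{i=1}^m exp(⟨θ, vᵢ⟩ − 1) + √δ ‖θ‖₂ over ℝ^K, and define ŵᵢ = exp(⟨θ̂, vᵢ⟩ − 1) for i = 1, …, m. Then (i) ŵ is feasible, i.e., ‖∑_{i=1}^m ŵᵢ vᵢ‖₂ ≤ √δ; (ii) ∑_{i=1}^m ŵᵢ log ŵᵢ = −D(θ̂); and consequently (iii) ŵ is a global minimizer of ∑_{i=1}^m wᵢ log wᵢ over all w ∈ ℝ^m with wᵢ ≥ 0 and ‖∑_{i=1}^m wᵢ vᵢ‖₂ ≤ √δ. -/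
/-!
Write `S = ∑ ŵᵢ vᵢ`: it is the gradient at `θ̂` of the smooth part `θ ↦ ∑ exp (⟪θ, vᵢ⟫ - 1)` of the
dual. Moving `θ̂` to `θ̂ + t u` with `t ↓ 0` and bounding the penalty `r ‖θ̂ + t u‖` from above by
`r ‖θ̂‖ + t c`, minimality gives `0 ≤ ⟪u, S⟫ + c`. With `u = -S`, `c = r ‖S‖` this is feasibility
`‖S‖ ≤ r`; with `u = -θ̂`, along which the norm is linear, it gives `⟪θ̂, S⟫ + r ‖θ̂‖ ≤ 0`, i.e.
`P(ŵ) ≤ -D(θ̂)`. Weak duality `-D(θ) ≤ P(w)` for feasible `w ≥ 0` (Cauchy–Schwarz plus the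
Fenchel–Young inequality `a x - exp (a - 1) ≤ x log x`) closes the gap and proves optimality.
-/

open Real Filter Topology Set
open scoped RealInnerProductSpace

theorem nonneg_of_hasDerivAt_of_eventually_le {f : ℝ → ℝ} {f' : ℝ} (hf : HasDerivAt f f' 0)
    (hmin : ∀ᶠ t in 𝓝[>] 0, f 0 ≤ f t) : 0 ≤ f' := by
  have hcone : (1 : ℝ) ∈ posTangentConeAt (Ioi 0) 0 :=
    one_mem_posTangentConeAt_iff_frequently.2 eventually_mem_nhdsWithin.frequently
  simpa using IsLocalMinOn.hasFDerivWithinAt_nonneg (s := Ioi 0) hmin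
    hf.hasDerivWithinAt.hasFDerivWithinAt hcone

namespace EntropyDuality

variable {ι E : Type*} [Fintype ι] [NormedAddCommGroup E] [InnerProductSpace ℝ E]

noncomputable def dualWeight (v : ι → E) (θ : E) (i : ι) : ℝ := exp (⟪θ, v i⟫ - 1)

noncomputable def moment (v : ι → E) (w : ι → ℝ) : E := ∑ i, w i • v i

noncomputable def primal (w : ι → ℝ) : ℝ := ∑ i, w i * log (w i)

noncomputable def dual (v : ι → E) (r : ℝ) (θ : E) : ℝ := ∑ i, dualWeight v θ i + r * ‖θ‖

theorem inner_moment (v : ι → E) (w : ι → ℝ) (θ : E) :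
    ⟪θ, moment v w⟫ = ∑ i, w i * ⟪θ, v i⟫ := by
  simp only [moment, inner_sum, real_inner_smul_right]

theorem hasDerivAt_sum_dualWeight_line (v : ι → E) (θ u : E) :
    HasDerivAt (fun t : ℝ => ∑ i, dualWeight v (θ + t • u) i)
      ⟪u, moment v (dualWeight v θ)⟫ 0 := by
  rw [inner_moment]
  refine HasDerivAt.fun_sum fun i _ => ?_
  have hline : HasDerivAt (fun t : ℝ => ⟪θ + t • u, v i⟫ - 1) ⟪u, v i⟫ 0 := by
    simp only [inner_add_left, real_inner_smul_left]
    simpa using ((hasDerivAt_id (0 : ℝ)).mul_const ⟪u, v i⟫).const_add ⟪θ, v i⟫ |>.sub_const 1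
  simpa [dualWeight, Function.comp_def, mul_comm] using (Real.hasDerivAt_exp _).comp (0 : ℝ) hline

variable {v : ι → E} {r : ℝ} {θ : E}

theorem nonneg_inner_moment_dualWeight_add_of_forall_dual_le (hmin : ∀ θ', dual v r θ ≤ dual v r θ')
    (u : E) (c : ℝ) (hpen : ∀ᶠ t in 𝓝[>] (0 : ℝ), r * ‖θ + t • u‖ ≤ r * ‖θ‖ + t * c) :
    0 ≤ ⟪u, moment v (dualWeight v θ)⟫ + c := by
  have hderiv : HasDerivAt (fun t : ℝ => ∑ i, dualWeight v (θ + t • u) i + (r * ‖θ‖ + t * c))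
      (⟪u, moment v (dualWeight v θ)⟫ + c) 0 := by
    simpa using (hasDerivAt_sum_dualWeight_line v θ u).fun_add
      (((hasDerivAt_id (0 : ℝ)).mul_const c).const_add (r * ‖θ‖))
  refine nonneg_of_hasDerivAt_of_eventually_le hderiv ?_
  filter_upwards [hpen] with t ht
  have hle := hmin (θ + t • u)
  simp only [dual, zero_smul, add_zero, zero_mul] at hle ⊢
  linarith

theorem norm_moment_dualWeight_le (hr : 0 ≤ r) (hmin : ∀ θ', dual v r θ ≤ dual v r θ') :
    ‖moment v (dualWeight v θ)‖ ≤ r := by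
  set S := moment v (dualWeight v θ)
  have hpen : ∀ t : ℝ, 0 < t → r * ‖θ + t • -S‖ ≤ r * ‖θ‖ + t * (r * ‖S‖) := fun t ht => by
    have htri := norm_add_le θ (t • -S)
    rw [norm_smul, norm_neg, Real.norm_of_nonneg ht.le] at htri
    nlinarith
  have key := nonneg_inner_moment_dualWeight_add_of_forall_dual_le hmin (-S) (r * ‖S‖)
    (eventually_nhdsWithin_of_forall hpen)
  rw [inner_neg_left, real_inner_self_eq_norm_sq] at key
  rcases (norm_nonneg S).eq_or_lt with hS | hS
  · exact hS ▸ hr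
  · nlinarith

theorem inner_moment_dualWeight_add_nonpos (hmin : ∀ θ', dual v r θ ≤ dual v r θ') :
    ⟪θ, moment v (dualWeight v θ)⟫ + r * ‖θ‖ ≤ 0 := by
  have hpen : ∀ t ∈ Ioo (0 : ℝ) 1, r * ‖θ + t • -θ‖ ≤ r * ‖θ‖ + t * -(r * ‖θ‖) := fun t ht => by
    have hshrink : θ + t • -θ = (1 - t) • θ := by module
    rw [hshrink, norm_smul, Real.norm_of_nonneg (by linarith [ht.2])]
    linarith
  have key := nonneg_inner_moment_dualWeight_add_of_forall_dual_le hmin (-θ) (-(r * ‖θ‖))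
    (eventually_of_mem (Ioo_mem_nhdsGT one_pos) hpen)
  rw [inner_neg_left] at key
  linarith

theorem primal_dualWeight (v : ι → E) (θ : E) :
    primal (dualWeight v θ) = ⟪θ, moment v (dualWeight v θ)⟫ - ∑ i, dualWeight v θ i := by
  simp only [primal, inner_moment, ← Finset.sum_sub_distrib, dualWeight, log_exp]
  exact Finset.sum_congr rfl fun i _ => by ring

theorem mul_sub_exp_sub_one_le_mul_log (a : ℝ) {x : ℝ} (hx : 0 ≤ x) :
    a * x - exp (a - 1) ≤ x * log x := by
  rcases hx.eq_or_lt with rfl | hx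
  · simpa using (exp_pos _).le
  · have h := add_one_le_exp (a - 1 - log x)
    rw [exp_sub, exp_log hx, le_div_iff₀ hx] at h
    nlinarith

theorem neg_dual_le_primal {w : ι → ℝ} (hw : ∀ i, 0 ≤ w i) (hfeas : ‖moment v w‖ ≤ r) (θ : E) :
    -dual v r θ ≤ primal w :=
  calc -dual v r θ ≤ ⟪θ, moment v w⟫ - ∑ i, dualWeight v θ i := by
        have hcs := neg_le_of_abs_le (abs_real_inner_le_norm θ (moment v w))
        have hbound := mul_le_mul_of_nonneg_left hfeas (norm_nonneg θ)
        simp only [dual]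
        linarith
    _ = ∑ i, (⟪θ, v i⟫ * w i - exp (⟪θ, v i⟫ - 1)) := by
        simp only [inner_moment, Finset.sum_sub_distrib, dualWeight, mul_comm]
    _ ≤ primal w := Finset.sum_le_sum fun i _ => mul_sub_exp_sub_one_le_mul_log _ (hw i)

theorem primal_dualWeight_eq_neg_dual (hr : 0 ≤ r) (hmin : ∀ θ', dual v r θ ≤ dual v r θ') :
    primal (dualWeight v θ) = -dual v r θ := by
  refine le_antisymm ?_ (neg_dual_le_primal (fun i => (exp_pos _).le)
    (norm_moment_dualWeight_le hr hmin) θ)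
  rw [primal_dualWeight, dual, neg_add]
  linarith [inner_moment_dualWeight_add_nonpos hmin]

end EntropyDuality

open EntropyDuality

theorem mahalanobis_entropy_primal_recovery_general (K m : ℕ)
    (v : Fin m → EuclideanSpace ℝ (Fin K)) (δ : ℝ)
    (θhat : EuclideanSpace ℝ (Fin K))
    (hmin : ∀ θ : EuclideanSpace ℝ (Fin K),
      ∑ i, Real.exp (⟪θhat, v i⟫ - 1) + Real.sqrt δ * ‖θhat‖ ≤
        ∑ i, Real.exp (⟪θ, v i⟫ - 1) + Real.sqrt δ * ‖θ‖)
    (what : Fin m → ℝ)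
    (hwhat : ∀ i, what i = Real.exp (⟪θhat, v i⟫ - 1)) :
    ‖∑ i, what i • v i‖ ≤ Real.sqrt δ ∧
    (∑ i, what i * Real.log (what i) =
      - (∑ i, Real.exp (⟪θhat, v i⟫ - 1) + Real.sqrt δ * ‖θhat‖)) ∧
    (∀ w : Fin m → ℝ, (∀ i, 0 ≤ w i) → ‖∑ i, w i • v i‖ ≤ Real.sqrt δ →
      ∑ i, what i * Real.log (what i) ≤ ∑ i, w i * Real.log (w i)) := by
  obtain rfl : what = dualWeight v θhat := funext hwhat
  have hr : 0 ≤ Real.sqrt δ := Real.sqrt_nonneg δ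
  have hdual : ∀ θ, dual v (Real.sqrt δ) θhat ≤ dual v (Real.sqrt δ) θ := hmin
  have hstrong := primal_dualWeight_eq_neg_dual hr hdual
  exact ⟨norm_moment_dualWeight_le hr hdual, hstrong,
    fun w hw hfeas => hstrong.trans_le (neg_dual_le_primal hw hfeas θhat)⟩

/-- Primal solution recovery from the dual (Theorem 1, relation (13), entropy case):
if θ̂ minimizes the entropy dual objective, then the weights ŵᵢ = exp(⟪θ̂, vᵢ⟫ - 1) are
feasible, their primal value equals minus the dual value at θ̂, and they globally
minimize the primal entropy objective over feasible nonnegative weights. -/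
theorem mahalanobis_entropy_primal_recovery (K m : ℕ)
    (v : Fin m → EuclideanSpace ℝ (Fin K)) (δ : ℝ) (hδ : 0 < δ)
    (θhat : EuclideanSpace ℝ (Fin K))
    (hmin : ∀ θ : EuclideanSpace ℝ (Fin K),
      ∑ i, Real.exp (⟪θhat, v i⟫ - 1) + Real.sqrt δ * ‖θhat‖ ≤
        ∑ i, Real.exp (⟪θ, v i⟫ - 1) + Real.sqrt δ * ‖θ‖)
    (what : Fin m → ℝ)
    (hwhat : ∀ i, what i = Real.exp (⟪θhat, v i⟫ - 1)) :
    ‖∑ i, what i • v i‖ ≤ Real.sqrt δ ∧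
    (∑ i, what i * Real.log (what i) =
      - (∑ i, Real.exp (⟪θhat, v i⟫ - 1) + Real.sqrt δ * ‖θhat‖)) ∧
    (∀ w : Fin m → ℝ, (∀ i, 0 ≤ w i) → ‖∑ i, w i • v i‖ ≤ Real.sqrt δ →
      ∑ i, what i * Real.log (what i) ≤ ∑ i, w i * Real.log (w i)) :=
  mahalanobis_entropy_primal_recovery_general K m v δ θhat hmin what hwhat
end

section
/- Strong duality for Mahalanobis balancing with the normalization constraint (Section 3.6): Let u₁, …, u_m, c ∈ ℝ^K (m ≥ 1) and δ > 0, and suppose the Slater condition holds: there exists w⁰ ∈ ℝ^m with w⁰ᵢ ≥ 0, ∑_{i=1}^m w⁰ᵢ = 1 and ‖∑_{i=1}^m w⁰ᵢ uᵢ − c‖₂ < √δ. Then the infimum of ∑_{i=1}^m wᵢ log wᵢ over all w ∈ ℝ^m with wᵢ ≥ 0, ∑_{i=1}^m wᵢ = 1, and ‖∑_{i=1}^m wᵢ uᵢ − c‖₂ ≤ √δ equals the negative of the infimum over θ ∈ ℝ^K of log(∑_{i=1}^m exp(⟨θ, uᵢ − c⟩)) + √δ ‖θ‖₂. -/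
/-!
Write `aᵢ = uᵢ - c`, `r = √δ` and `g θ = log ∑ exp ⟪θ, aᵢ⟫ + r ‖θ‖`. Gibbs' inequality and
Cauchy–Schwarz give weak duality `-g θ ≤ ∑ wᵢ log wᵢ` for every feasible `w`. The Slater point
makes `g` coercive, so it attains its minimum at some `θ*`. Comparing `g` with its convex majorant
along segments from `θ*` shows that `v = ∑ softmax(⟪θ*, a⟫)ᵢ aᵢ` satisfies `‖v‖ ≤ r` and
`⟪θ*, v⟫ = -r ‖θ*‖`; hence the softmax weights are feasible with entropy exactly `-g θ*`.
-/

open scoped RealInnerProductSpace BigOperators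

open Real Set Filter

theorem HasDerivAt.nonneg_of_isMinOn_Icc {φ : ℝ → ℝ} {d a b : ℝ} (hφ : HasDerivAt φ d a)
    (hab : a < b) (hmin : IsMinOn φ (Icc a b) a) : 0 ≤ d := by
  have hcone : b - a ∈ posTangentConeAt (Icc a b) a :=
    sub_mem_posTangentConeAt_of_segment_subset (segment_eq_Icc hab.le).subset
  have h := hmin.localize.hasFDerivWithinAt_nonneg hφ.hasFDerivAt.hasFDerivWithinAt hcone
  rw [ContinuousLinearMap.toSpanSingleton_apply, smul_eq_mul] at h
  exact nonneg_of_mul_nonneg_right h (sub_pos.mpr hab)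

theorem mul_log_sub_log_le {w s : ℝ} (hw : 0 ≤ w) (hs : 0 < s) :
    w * (log s - log w) ≤ s - w := by
  rcases hw.eq_or_lt with rfl | hw
  · simpa using hs.le
  calc w * (log s - log w) = w * log (s / w) := by rw [log_div hs.ne' hw.ne']
    _ ≤ w * (s / w - 1) := by gcongr; exact log_le_sub_one_of_pos (div_pos hs hw)
    _ = s - w := by field_simp

section Softmax

variable {ι : Type*} [Fintype ι]

noncomputable def softmax (b : ι → ℝ) (i : ι) : ℝ := exp (b i) / ∑ j, exp (b j)

variable [Nonempty ι] (b : ι → ℝ)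

theorem sum_exp_pos : 0 < ∑ i, exp (b i) :=
  Finset.sum_pos (fun i _ => exp_pos (b i)) Finset.univ_nonempty

theorem softmax_pos (i : ι) : 0 < softmax b i := div_pos (exp_pos _) (sum_exp_pos b)

theorem sum_softmax : ∑ i, softmax b i = 1 := by
  simp only [softmax, ← Finset.sum_div, div_self (sum_exp_pos b).ne']

theorem log_softmax (i : ι) : log (softmax b i) = b i - log (∑ j, exp (b j)) := by
  rw [softmax, log_div (exp_pos _).ne' (sum_exp_pos b).ne', log_exp]

theorem sum_softmax_mul_log_softmax :
    ∑ i, softmax b i * log (softmax b i) = ∑ i, softmax b i * b i - log (∑ i, exp (b i)) := by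
  simp_rw [log_softmax, mul_sub, Finset.sum_sub_distrib, ← Finset.sum_mul, sum_softmax, one_mul]

theorem sum_mul_sub_sum_mul_log_le_log_sum_exp {w : ι → ℝ} (hw : ∀ i, 0 ≤ w i)
    (hw1 : ∑ i, w i = 1) :
    ∑ i, w i * b i - ∑ i, w i * log (w i) ≤ log (∑ i, exp (b i)) := by
  have key : ∑ i, w i * (log (softmax b i) - log (w i)) ≤ ∑ i, (softmax b i - w i) :=
    Finset.sum_le_sum fun i _ => mul_log_sub_log_le (hw i) (softmax_pos b i)
  simp_rw [log_softmax, Finset.sum_sub_distrib, sum_softmax, hw1, mul_sub,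
    Finset.sum_sub_distrib, ← Finset.sum_mul, hw1, one_mul] at key
  linarith

theorem hasDerivAt_log_sum_exp_add_mul (c : ι → ℝ) :
    HasDerivAt (fun t => log (∑ i, exp (b i + t * c i))) (∑ i, softmax b i * c i) 0 := by
  have hsum : HasDerivAt (fun t => ∑ i, exp (b i + t * c i)) (∑ i, exp (b i) * c i) 0 := by
    refine HasDerivAt.fun_sum fun i _ => ?_
    simpa using (((hasDerivAt_id (0 : ℝ)).mul_const (c i)).const_add (b i)).exp
  convert hsum.log (by simpa using (sum_exp_pos b).ne') using 1
  simp [softmax, div_mul_eq_mul_div, Finset.sum_div]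

end Softmax

theorem norm_le_and_inner_eq_of_forall_le_inner_sub_add {E : Type*} [NormedAddCommGroup E]
    [InnerProductSpace ℝ E] {r : ℝ} (hr : 0 ≤ r) {v θ : E}
    (h : ∀ x, r * ‖θ‖ ≤ ⟪v, x - θ⟫ + r * ‖x‖) : ‖v‖ ≤ r ∧ ⟪θ, v⟫ = -(r * ‖θ‖) := by
  have at_zero := h 0
  have at_two := h ((2 : ℝ) • θ)
  have at_shift := h (θ - v)
  rw [zero_sub, inner_neg_right, norm_zero, mul_zero, add_zero] at at_zero
  rw [two_smul, add_sub_cancel_right, ← two_smul ℝ θ, norm_smul, Real.norm_two] at at_two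
  rw [sub_sub_cancel_left, inner_neg_right, real_inner_self_eq_norm_sq] at at_shift
  have := norm_sub_le θ v
  refine ⟨?_, by rw [real_inner_comm]; nlinarith⟩
  nlinarith [norm_nonneg v]

section Balancing

variable {ι E : Type*} [Fintype ι] [NormedAddCommGroup E] [InnerProductSpace ℝ E]

theorem sum_smul_sub_of_sum_eq_one (u : ι → E) (c : E) {w : ι → ℝ} (hw1 : ∑ i, w i = 1) :
    ∑ i, w i • u i - c = ∑ i, w i • (u i - c) := by
  simp_rw [smul_sub, Finset.sum_sub_distrib, ← Finset.sum_smul, hw1, one_smul]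

theorem inner_sum_smul (θ : E) (w : ι → ℝ) (a : ι → E) :
    ⟪θ, ∑ i, w i • a i⟫ = ∑ i, w i * ⟪θ, a i⟫ := by
  simp only [inner_sum, real_inner_smul_right]

noncomputable def dualObjective (a : ι → E) (r : ℝ) (θ : E) : ℝ :=
  log (∑ i, exp ⟪θ, a i⟫) + r * ‖θ‖

variable [Nonempty ι] (a : ι → E)

theorem neg_dualObjective_le {r : ℝ} {w : ι → ℝ} (hw : ∀ i, 0 ≤ w i) (hw1 : ∑ i, w i = 1)
    (hwr : ‖∑ i, w i • a i‖ ≤ r) (θ : E) :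
    -dualObjective a r θ ≤ ∑ i, w i * log (w i) := by
  have gibbs := sum_mul_sub_sum_mul_log_le_log_sum_exp (fun i => ⟪θ, a i⟫) hw hw1
  have cauchySchwarz : -(r * ‖θ‖) ≤ ⟪θ, ∑ i, w i • a i⟫ := calc
    -(r * ‖θ‖) ≤ -(‖θ‖ * ‖∑ i, w i • a i‖) := by rw [mul_comm]; gcongr
    _ ≤ ⟪θ, ∑ i, w i • a i⟫ := neg_le_of_abs_le (abs_real_inner_le_norm _ _)
  rw [inner_sum_smul] at cauchySchwarz
  rw [dualObjective]
  linarith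

theorem continuous_dualObjective (r : ℝ) : Continuous (dualObjective a r) :=
  ((continuous_finsetSum _ fun _ _ => (continuous_id.inner continuous_const).rexp).log
    fun _ => (sum_exp_pos _).ne').add (continuous_const.mul continuous_norm)

/-- Under a Slater point `w₀`, the dual objective grows at least like `(r - ‖∑ w₀ᵢ aᵢ‖) ‖θ‖`. -/
theorem tendsto_dualObjective_cocompact [ProperSpace E] {r : ℝ} {w₀ : ι → ℝ}
    (hw₀ : ∀ i, 0 ≤ w₀ i) (hw₀1 : ∑ i, w₀ i = 1) (hw₀r : ‖∑ i, w₀ i • a i‖ < r) :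
    Tendsto (dualObjective a r) (cocompact E) atTop := by
  set ρ := ‖∑ i, w₀ i • a i‖
  have lower (θ : E) : (r - ρ) * ‖θ‖ - ∑ i, w₀ i * log (w₀ i) ≤ dualObjective a r θ := by
    have := neg_dualObjective_le a hw₀ hw₀1 le_rfl θ
    rw [dualObjective] at this ⊢
    linarith
  refine tendsto_atTop_mono lower (tendsto_atTop_add_const_right _ _ ?_)
  exact tendsto_norm_cocompact_atTop.const_mul_atTop (sub_pos.mpr hw₀r)

/-- At a minimiser `θ`, `-(∑ softmax ⟪θ, a⟫ • a)` is a subgradient of `r ‖·‖` at `θ`. -/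
theorem le_inner_sub_add_of_forall_dualObjective_le {r : ℝ} (hr : 0 ≤ r) {θ : E}
    (hθ : ∀ y, dualObjective a r θ ≤ dualObjective a r y) (x : E) :
    r * ‖θ‖ ≤ ⟪∑ i, softmax (fun j => ⟪θ, a j⟫) i • a i, x - θ⟫ + r * ‖x‖ := by
  set b := fun j => ⟪θ, a j⟫
  set c := fun j => ⟪x - θ, a j⟫
  -- convexity of the norm gives a majorant of the dual objective on the segment `[θ, x]`
  set φ := fun t : ℝ => log (∑ i, exp (b i + t * c i)) + r * ((1 - t) * ‖θ‖ + t * ‖x‖)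
  have hφ : HasDerivAt φ (∑ i, softmax b i * c i + r * (‖x‖ - ‖θ‖)) 0 := by
    refine (hasDerivAt_log_sum_exp_add_mul b c).add ?_
    refine (((((hasDerivAt_id (0 : ℝ)).const_sub 1).mul_const ‖θ‖).add
      ((hasDerivAt_id (0 : ℝ)).mul_const ‖x‖)).const_mul r).congr_deriv ?_
    simp only [one_mul]
    ring
  have hmin : IsMinOn φ (Icc 0 1) 0 := by
    intro t ⟨ht0, ht1⟩
    have hline : θ + t • (x - θ) = (1 - t) • θ + t • x := by
      rw [smul_sub, sub_smul, one_smul]; abel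
    have hnorm : ‖θ + t • (x - θ)‖ ≤ (1 - t) * ‖θ‖ + t * ‖x‖ := by
      rw [hline]
      refine (norm_add_le _ _).trans_eq ?_
      rw [norm_smul, norm_smul, Real.norm_of_nonneg (sub_nonneg.mpr ht1),
        Real.norm_of_nonneg ht0]
    have := hθ (θ + t • (x - θ))
    simp only [dualObjective, inner_add_left, real_inner_smul_left] at this
    show φ 0 ≤ φ t
    simp only [φ, b, c, zero_mul, add_zero, sub_zero, one_mul]
    linarith [mul_le_mul_of_nonneg_left hnorm hr]
  have := hφ.nonneg_of_isMinOn_Icc one_pos hmin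
  rw [real_inner_comm, inner_sum_smul]
  linarith

theorem exists_isLeast_entropy_and_isLeast_dualObjective [ProperSpace E] (u : ι → E) (c : E)
    {r : ℝ}
    (hslater : ∃ w₀ : ι → ℝ, (∀ i, 0 ≤ w₀ i) ∧ ∑ i, w₀ i = 1 ∧ ‖∑ i, w₀ i • u i - c‖ < r) :
    ∃ θ, IsLeast {p | ∃ w : ι → ℝ, (∀ i, 0 ≤ w i) ∧ ∑ i, w i = 1 ∧
        ‖∑ i, w i • u i - c‖ ≤ r ∧ p = ∑ i, w i * log (w i)}
        (-dualObjective (fun i => u i - c) r θ) ∧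
      IsLeast {d | ∃ θ, d = dualObjective (fun i => u i - c) r θ}
        (dualObjective (fun i => u i - c) r θ) := by
  set a := fun i => u i - c
  obtain ⟨w₀, hw₀, hw₀1, hw₀r⟩ := hslater
  rw [sum_smul_sub_of_sum_eq_one u c hw₀1] at hw₀r
  have hr : 0 ≤ r := (norm_nonneg _).trans hw₀r.le
  obtain ⟨θ, hθ⟩ := (continuous_dualObjective a r).exists_forall_le
    (tendsto_dualObjective_cocompact a hw₀ hw₀1 hw₀r)
  set w := softmax (fun j => ⟪θ, a j⟫)
  obtain ⟨hwr, hθw⟩ := norm_le_and_inner_eq_of_forall_le_inner_sub_add hr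
    (le_inner_sub_add_of_forall_dualObjective_le a hr hθ)
  have entropy_w : ∑ i, w i * log (w i) = -dualObjective a r θ := by
    rw [sum_softmax_mul_log_softmax, ← inner_sum_smul, hθw, dualObjective]
    ring
  refine ⟨θ, ⟨⟨w, fun i => (softmax_pos _ i).le, sum_softmax _, ?_, entropy_w.symm⟩, ?_⟩,
    ⟨⟨θ, rfl⟩, ?_⟩⟩
  · rwa [sum_smul_sub_of_sum_eq_one u c (sum_softmax _)]
  · rintro p ⟨w', hw', hw'1, hw'r, rfl⟩
    rw [sum_smul_sub_of_sum_eq_one u c hw'1] at hw'r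
    exact neg_dualObjective_le a hw' hw'1 hw'r θ
  · rintro d ⟨θ', rfl⟩
    exact hθ θ'

end Balancing

theorem normalized_mahalanobis_strong_duality_general (K m : ℕ) (hm : 1 ≤ m)
    (u : Fin m → EuclideanSpace ℝ (Fin K)) (c : EuclideanSpace ℝ (Fin K))
    (δ : ℝ)
    (hslater : ∃ w0 : Fin m → ℝ, (∀ i, 0 ≤ w0 i) ∧ ∑ i, w0 i = 1 ∧
      ‖(∑ i, w0 i • u i) - c‖ < Real.sqrt δ) :
    sInf {p : ℝ | ∃ w : Fin m → ℝ, (∀ i, 0 ≤ w i) ∧ ∑ i, w i = 1 ∧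
        ‖(∑ i, w i • u i) - c‖ ≤ Real.sqrt δ ∧
        p = ∑ i, w i * Real.log (w i)} =
      - sInf {d : ℝ | ∃ θ : EuclideanSpace ℝ (Fin K),
        d = Real.log (∑ i, Real.exp (⟪θ, u i - c⟫)) + Real.sqrt δ * ‖θ‖} := by
  have : Nonempty (Fin m) := ⟨⟨0, hm⟩⟩
  obtain ⟨θ, hprimal, hdual⟩ := exists_isLeast_entropy_and_isLeast_dualObjective u c hslater
  rw [hprimal.csInf_eq]
  exact congrArg Neg.neg hdual.csInf_eq.symm

/-- Strong duality for Mahalanobis balancing with the normalization constraint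
(Section 3.6): under the Slater condition, the infimum of the entropy over probability
weight vectors satisfying the quadratic balance constraint equals the negative of the
infimum of the ℓ₂-regularized log-sum-exp dual objective. -/
theorem normalized_mahalanobis_strong_duality (K m : ℕ) (hm : 1 ≤ m)
    (u : Fin m → EuclideanSpace ℝ (Fin K)) (c : EuclideanSpace ℝ (Fin K))
    (δ : ℝ) (hδ : 0 < δ)
    (hslater : ∃ w0 : Fin m → ℝ, (∀ i, 0 ≤ w0 i) ∧ ∑ i, w0 i = 1 ∧
      ‖(∑ i, w0 i • u i) - c‖ < Real.sqrt δ) :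
    sInf {p : ℝ | ∃ w : Fin m → ℝ, (∀ i, 0 ≤ w i) ∧ ∑ i, w i = 1 ∧
        ‖(∑ i, w i • u i) - c‖ ≤ Real.sqrt δ ∧
        p = ∑ i, w i * Real.log (w i)} =
      - sInf {d : ℝ | ∃ θ : EuclideanSpace ℝ (Fin K),
        d = Real.log (∑ i, Real.exp (⟪θ, u i - c⟫)) + Real.sqrt δ * ‖θ‖} :=
  normalized_mahalanobis_strong_duality_general K m hm u c δ hslater
end
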